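/- arXiv:2104.01415 — 2 statements merged into one kernel-verified Lean document; each statement's English description precedes it below -/
import Mathlib

section
/- The q-Hahn weights W are stochastic: for any i ∈ ℤ_{≥0} and j ∈ ℤ_{≥0}, the sum over k,l ∈ ℤ_{≥0} of W_{t,s}(i,j;k,l) equals 1, where W_{t,s}(i,j;k,l) = 𝟙_{i+j=k+l} 𝟙_{i≥l} (s²/t²)^l · (s²/t²;q)_{i-l} (t²;q)_l / (s²;q)_i · (q;q)_i / ((q;q)_{i-l}(q;q)_l). -/
/-- The q-Pochhammer symbol `(x;q)_n = ∏_{i=1}^n (1 - x q^{i-1})`. -/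
noncomputable def qp (q x : ℂ) (n : ℕ) : ℂ := ∏ r ∈ Finset.range n, (1 - x * q ^ r)

/-- The q-Hahn vertex weight `W_{t,s}(i,j;k,l)`. -/
noncomputable def Wqh (q t s : ℂ) (i j k l : ℕ) : ℂ :=
  if i + j = k + l ∧ l ≤ i then
    (s ^ 2 / t ^ 2) ^ l * qp q (s ^ 2 / t ^ 2) (i - l) * qp q (t ^ 2) l / qp q (s ^ 2) i *
      (qp q q i / (qp q q (i - l) * qp q q l))
  else 0

/-!
The weights vanish off the segment `k + l = i + j`, `l ≤ i`, and the factor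
`(q;q)_i / ((q;q)_{i-l} (q;q)_l)` is the Gaussian binomial `[i, l]_q`. The sum is therefore
`(s²;q)_i⁻¹ ∑_l a^l (a;q)_{i-l} (b;q)_l [i, l]_q` with `a = s²/t²`, `b = t²`, and the
q-Chu–Vandermonde identity evaluates the numerator to `(ab;q)_i = (s²;q)_i`.
-/

open Finset

@[simp] theorem qp_zero (q x : ℂ) : qp q x 0 = 1 := prod_range_zero _

theorem qp_succ (q x : ℂ) (n : ℕ) : qp q x (n + 1) = qp q x n * (1 - x * q ^ n) :=
  prod_range_succ _ _

theorem qp_self_ne_zero {q : ℂ} (hq : ∀ n : ℕ, 1 ≤ n → q ^ n ≠ 1) (n : ℕ) : qp q q n ≠ 0 :=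
  prod_ne_zero_iff.2 fun r _ h =>
    hq (r + 1) (by omega) (by rw [pow_succ']; exact (sub_eq_zero.1 h).symm)

/-- The Gaussian binomial coefficient, defined by the q-Pascal rule so that no division occurs. -/
noncomputable def qBinom (q : ℂ) : ℕ → ℕ → ℂ
  | 0, 0 => 1
  | 0, _ + 1 => 0
  | _ + 1, 0 => 1
  | i + 1, l + 1 => qBinom q i (l + 1) + q ^ (i - l) * qBinom q i l

@[simp] theorem qBinom_zero_right (q : ℂ) (i : ℕ) : qBinom q i 0 = 1 := by
  cases i <;> rfl

theorem qBinom_succ_succ (q : ℂ) (i l : ℕ) :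
    qBinom q (i + 1) (l + 1) = qBinom q i (l + 1) + q ^ (i - l) * qBinom q i l := rfl

theorem qBinom_eq_zero_of_lt (q : ℂ) {i l : ℕ} (h : i < l) : qBinom q i l = 0 := by
  induction i generalizing l with
  | zero => obtain ⟨l, rfl⟩ := Nat.exists_eq_add_of_lt h; rfl
  | succ i ih =>
    obtain ⟨l, rfl⟩ := Nat.exists_eq_add_of_lt (Nat.zero_lt_of_lt h)
    rw [zero_add] at *
    rw [qBinom_succ_succ, ih (by omega), ih (by omega), mul_zero, add_zero]

@[simp] theorem qBinom_self (q : ℂ) (i : ℕ) : qBinom q i i = 1 := by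
  induction i with
  | zero => rfl
  | succ i ih => rw [qBinom_succ_succ, qBinom_eq_zero_of_lt q (Nat.lt_succ_self i), ih]; simp

theorem qp_mul_qp_mul_qBinom (q : ℂ) (m l : ℕ) :
    qp q q m * qp q q l * qBinom q (m + l) l = qp q q (m + l) := by
  induction h : m + l generalizing m l with
  | zero =>
    obtain ⟨rfl, rfl⟩ : m = 0 ∧ l = 0 := by omega
    simp
  | succ n ih =>
    rcases l with _ | l
    · simp [← h]
    rcases m with _ | m
    · simp [← h]
    have h₁ := ih m (l + 1) (by omega)
    have h₂ := ih (m + 1) l (by omega)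
    have hpow : q ^ (m + 1) * q ^ (l + 1) = q * q ^ n := by
      rw [← pow_add, h, pow_succ']
    rw [qp_succ q q l] at h₁
    rw [qp_succ q q m] at h₂
    rw [qBinom_succ_succ, show n - l = m + 1 by omega, qp_succ, qp_succ q q l, qp_succ q q n]
    linear_combination
      (1 - q * q ^ m) * h₁ + q ^ (m + 1) * (1 - q * q ^ l) * h₂ - qp q q n * hpow

theorem q_chu_vandermonde (q a b : ℂ) (i : ℕ) :
    ∑ l ∈ range (i + 1), a ^ l * qp q a (i - l) * qp q b l * qBinom q i l = qp q (a * b) i := by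
  induction i with
  | zero => simp
  | succ i ih =>
    -- after q-Pascal, each term is `(1 - a b q^i)` times the old term plus a telescoping part
    let V (l : ℕ) := a ^ l * qp q a (i + 1 - l) * qp q b l * qBinom q i l
    have hterm : ∀ l ∈ range (i + 1),
        a ^ (l + 1) * qp q a (i + 1 - (l + 1)) * qp q b (l + 1) * qBinom q (i + 1) (l + 1) =
          (1 - a * b * q ^ i) * (a ^ l * qp q a (i - l) * qp q b l * qBinom q i l) +
            (V (l + 1) - V l) := by
      intro l hl
      have hli : l ≤ i := Nat.lt_succ_iff.1 (mem_range.1 hl)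
      have hpow : q ^ (i - l) * q ^ l = q ^ i := by rw [← pow_add, Nat.sub_add_cancel hli]
      simp only [V, qBinom_succ_succ, show i + 1 - (l + 1) = i - l by omega,
        show i + 1 - l = i - l + 1 by omega, qp_succ]
      linear_combination -a * (a ^ l * qp q a (i - l) * qp q b l * b * qBinom q i l) * hpow
    have hV : V (i + 1) = 0 := by simp [V, qBinom_eq_zero_of_lt q (Nat.lt_succ_self i)]
    rw [sum_range_succ', sum_congr rfl hterm, sum_add_distrib, ← mul_sum, ih, sum_range_sub V,
      hV, qp_succ, mul_comm (qp q (a * b) i)]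
    simp [V]

theorem tsum_tsum_eq_sum_range {M : Type*} [AddCommMonoid M] [TopologicalSpace M]
    (f : ℕ → ℕ → M) {n m : ℕ} (hmn : m ≤ n) (hf : ∀ k l, f k l ≠ 0 → k + l = n ∧ l ≤ m) :
    ∑' (k : ℕ) (l : ℕ), f k l = ∑ l ∈ range (m + 1), f (n - l) l := by
  have hinner (k : ℕ) : ∑' l, f k l = f k (n - k) :=
    tsum_eq_single _ fun l hl => by_contra fun h => hl (by have := hf k l h; omega)
  have hsupport (k : ℕ) (hk : k ∉ Icc (n - m) n) : f k (n - k) = 0 := by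
    by_contra h
    have := hf k _ h
    simp only [mem_Icc] at hk
    omega
  rw [tsum_congr hinner, tsum_eq_sum hsupport]
  refine sum_nbij' (n - ·) (n - ·) ?_ ?_ ?_ ?_ ?_
  all_goals intro k hk; simp only [mem_Icc, mem_range] at hk ⊢
  · omega
  · omega
  · omega
  · omega
  · congr 1; omega

theorem add_eq_and_le_of_Wqh_ne_zero {q t s : ℂ} {i j k l : ℕ} (h : Wqh q t s i j k l ≠ 0) :
    k + l = i + j ∧ l ≤ i := by
  unfold Wqh at h
  split_ifs at h with hkl
  · exact ⟨hkl.1.symm, hkl.2⟩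
  · exact absurd rfl h

theorem Wqh_eq_qBinom_div {q : ℂ} (hq : ∀ n : ℕ, 1 ≤ n → q ^ n ≠ 1) (t s : ℂ) {i l : ℕ}
    (j : ℕ) (hl : l ≤ i) :
    Wqh q t s i j (i + j - l) l = (s ^ 2 / t ^ 2) ^ l * qp q (s ^ 2 / t ^ 2) (i - l) *
      qp q (t ^ 2) l * qBinom q i l / qp q (s ^ 2) i := by
  have hbinom := qp_mul_qp_mul_qBinom q (i - l) l
  rw [Nat.sub_add_cancel hl] at hbinom
  rw [Wqh, if_pos ⟨by omega, hl⟩, ← hbinom]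
  field_simp [qp_self_ne_zero hq]

/-- Stochasticity of the q-Hahn weights: for any `i, j ∈ ℤ_{≥0}`,
`∑_{k,l ∈ ℤ_{≥0}} W_{t,s}(i,j;k,l) = 1`. -/
theorem stmt2 (q s t : ℂ) (ht : t ≠ 0) (hq : ∀ n : ℕ, 1 ≤ n → q ^ n ≠ 1)
    (i j : ℕ) (hs : qp q (s ^ 2) i ≠ 0) :
    (∑' (k : ℕ) (l : ℕ), Wqh q t s i j k l) = 1 := by
  rw [tsum_tsum_eq_sum_range _ (Nat.le_add_right i j) fun _ _ => add_eq_and_le_of_Wqh_ne_zero,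
    sum_congr rfl fun l hl => Wqh_eq_qBinom_div hq t s j (Nat.lt_succ_iff.1 (mem_range.1 hl)),
    ← sum_div, q_chu_vandermonde, div_mul_cancel₀ _ (pow_ne_zero 2 ht), div_self hs]
end

section
/- The dual higher spin weights w* satisfy the reflection relation w*_{u;s}(i,j;k,l) = [(s-u)/(s(1-us))] · w_{1/u;s}(i, 1-j; k, 1-l) for all i,k ∈ ℤ_{≥0} and j,l ∈ {0,1}. -/
/-- Higher spin vertex weights `w_{u;s}(i,j;k,l)`: bottom `i`, left `j`, top `k`,
right `l`; zero unless `i + j = k + l` with `j,l ∈ {0,1}`. -/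
noncomputable def whs (q u s : ℂ) (i j k l : ℕ) : ℂ :=
  if j = 0 ∧ l = 0 ∧ k = i then (1 - s * u * q ^ i) / (1 - s * u)
  else if j = 0 ∧ l = 1 ∧ k + 1 = i then (q ^ i - 1) * s * u / (1 - s * u)
  else if j = 1 ∧ l = 0 ∧ k = i + 1 then (1 - s ^ 2 * q ^ i) / (1 - s * u)
  else if j = 1 ∧ l = 1 ∧ k = i then (s ^ 2 * q ^ i - s * u) / (1 - s * u)
  else 0

/-- Dual higher spin vertex weights `w*_{u;s}`: bottom `i`, left `j`, top `k`,
right `l`; zero unless `i + l = k + j` with `j,l ∈ {0,1}`. -/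
noncomputable def whsDual (q u s : ℂ) (i j k l : ℕ) : ℂ :=
  if j = 0 ∧ l = 0 ∧ k = i then (1 - s * u * q ^ i) / (1 - s * u)
  else if j = 0 ∧ l = 1 ∧ k = i + 1 then (-(s⁻¹ * u) * (1 - s ^ 2 * q ^ i)) / (1 - s * u)
  else if j = 1 ∧ l = 0 ∧ k + 1 = i then (1 - q ^ i) / (1 - s * u)
  else if j = 1 ∧ l = 1 ∧ k = i then (q ^ i - s⁻¹ * u) / (1 - s * u)
  else 0

lemma one_sub_mul_inv_ne_zero {K : Type*} [Field K] {u s : K} (hu : u ≠ 0) (h : u ≠ s) :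
    1 - s * u⁻¹ ≠ 0 := by
  rw [show 1 - s * u⁻¹ = (u - s) / u by field_simp]
  exact div_ne_zero (sub_ne_zero.mpr h) hu

/-- Reflection relation between dual and ordinary higher spin weights:
`w*_{u;s}(i,j;k,l) = (s-u)/(s(1-us)) · w_{1/u;s}(i,1-j;k,1-l)`. -/
theorem stmt5 (q u s : ℂ) (hs : s ≠ 0) (hu : u ≠ 0) (h1 : u * s ≠ 1) (h2 : u ≠ s)
    (i k : ℕ) (j l : ℕ) (hj : j ≤ 1) (hl : l ≤ 1) :
    whsDual q u s i j k l
      = (s - u) / (s * (1 - u * s)) * whs q u⁻¹ s i (1 - j) k (1 - l) := by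
  have hus : 1 - u * s ≠ 0 := sub_ne_zero.mpr h1.symm
  have hsu := one_sub_mul_inv_ne_zero hu h2
  -- In each of the four cases both sides vanish under the same condition on `k`.
  interval_cases j <;> interval_cases l <;>
    simp only [whs, whsDual, zero_ne_one, one_ne_zero, true_and, false_and, and_false, and_self,
      ↓reduceIte, tsub_zero, tsub_self, neg_mul, mul_ite, mul_zero] <;>
    refine if_congr Iff.rfl ?_ rfl <;> field_simp <;> ring
end
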